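/- Let M→N be a matroid perspective on a finite linearly ordered ground set E. Let B ⊆ E be independent in M, let P ⊆ Int_N(B), let Q ⊆ Ext_M(B), and set A = (B∖P) ∪ Q. Then r_M(A) = |B| − |P|. -/

import Mathlib

/-- A circuit of a matroid: a minimal dependent set. -/
def Matroid.IsCircuit' {α : Type*} (M : Matroid α) (C : Set α) : Prop :=
  M.Dep C ∧ ∀ D, M.Dep D → D ⊆ C → D = C

/-- A cocircuit of a matroid: a circuit of the dual matroid. -/
def Matroid.IsCocircuit' {α : Type*} (M : Matroid α) (C : Set α) : Prop :=
  M✶.IsCircuit' C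

/-- The rank of a set in a matroid: the largest cardinality of an independent subset. -/
noncomputable def Matroid.rk' {α : Type*} (M : Matroid α) (A : Set α) : ℕ :=
  sSup {n : ℕ | ∃ I, I ⊆ A ∧ M.Indep I ∧ I.ncard = n}

/-- `e` is the minimum element of the set `C`. -/
def IsMinOf {α : Type*} [LinearOrder α] (C : Set α) (e : α) : Prop :=
  e ∈ C ∧ ∀ x ∈ C, e ≤ x

/-- `Int_M(A)`: internally active elements of `A` w.r.t. `M`
(the ground set is the whole type, so `E ∖ A = Aᶜ`). -/
def IntSet {α : Type*} [LinearOrder α] (M : Matroid α) (A : Set α) : Set α :=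
  {e | e ∈ A ∧ ∃ C, M.IsCocircuit' C ∧ C ⊆ Aᶜ ∪ {e} ∧ IsMinOf C e}

/-- `Ext_M(A)`: externally active elements w.r.t. `M`. -/
def ExtSet {α : Type*} [LinearOrder α] (M : Matroid α) (A : Set α) : Set α :=
  {e | e ∉ A ∧ ∃ C, M.IsCircuit' C ∧ C ⊆ A ∪ {e} ∧ IsMinOf C e}

/-- `P_M(A)`: smallest elements of cocircuits of `M` contained in `E ∖ A`. -/
def PActSet {α : Type*} [LinearOrder α] (M : Matroid α) (A : Set α) : Set α :=
  {e | e ∉ A ∧ ∃ C, M.IsCocircuit' C ∧ C ⊆ Aᶜ ∧ IsMinOf C e}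

/-- `Q_M(A)`: smallest elements of circuits of `M` contained in `A`. -/
def QActSet {α : Type*} [LinearOrder α] (M : Matroid α) (A : Set α) : Set α :=
  {e | e ∈ A ∧ ∃ C, M.IsCircuit' C ∧ C ⊆ A ∧ IsMinOf C e}

/-! Each `q ∈ Q` is the minimum of an `M`-circuit `C ⊆ B ∪ {q}`. Such a circuit cannot contain
an element `y ∈ P`: the `N`-cocircuit witnessing that `y` is internally active would meet `C` in
`{y}` alone, which a perspective forbids. Hence `q ∈ cl_M(C \ {q}) ⊆ cl_M(B \ P)`, so `B \ P` is
a basis of `(B \ P) ∪ Q`. -/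

open Set

namespace Matroid

variable {α : Type*} {M N : Matroid α} {C K I X : Set α} {e : α}

lemma isCircuit'_iff : M.IsCircuit' C ↔ M.IsCircuit C :=
  isCircuit_iff.symm

lemma isCocircuit'_iff : M.IsCocircuit' K ↔ M.IsCocircuit K :=
  isCircuit'_iff

lemma IsCocircuit.isFlat_sdiff (hK : M.IsCocircuit K) : M.IsFlat (M.E \ K) := by
  refine isFlat_iff_closure_eq.2 <| (subset_closure _ _ sdiff_subset).antisymm' fun x hx ↦ ?_
  by_contra hxK
  have hxK' : x ∈ K := by
    by_contra h
    exact hxK ⟨M.closure_subset_ground _ hx, h⟩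
  -- a circuit through `x` inside `insert x (M.E \ K)` meets `K` in `{x}` alone
  obtain ⟨C, hCss, hC, hxC⟩ := exists_isCircuit_of_mem_closure hx hxK
  refine hC.inter_isCocircuit_ne_singleton hK (e := x) ?_
  refine subset_antisymm (fun y ⟨hyC, hyK⟩ ↦ ?_) (singleton_subset_iff.2 ⟨hxC, hxK'⟩)
  obtain rfl | hy := hCss hyC
  · rfl
  · exact absurd hyK hy.2

lemma IsCircuit.inter_isCocircuit_ne_singleton_of_perspective
    (hMN : ∀ F, N.IsFlat F → M.IsFlat F) (hE : M.E = N.E)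
    (hC : M.IsCircuit C) (hK : N.IsCocircuit K) : C ∩ K ≠ {e} := by
  intro hCK
  have heC : e ∈ C := (hCK.symm.subset rfl).1
  have heK : e ∈ K := (hCK.symm.subset rfl).2
  have hsub : C \ {e} ⊆ N.E \ K := fun y ⟨hyC, hye⟩ ↦
    ⟨hE ▸ hC.subset_ground hyC, fun hyK ↦ hye (hCK.subset ⟨hyC, hyK⟩)⟩
  have hcl := M.closure_subset_closure hsub (hC.mem_closure_sdiff_singleton_of_mem heC)
  rw [(hMN _ hK.isFlat_sdiff).closure] at hcl
  exact hcl.2 heK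

lemma IsBasis'.rk'_eq_ncard (hI : M.IsBasis' I X) (hIfin : I.Finite) : M.rk' X = I.ncard := by
  have hbound : ∀ n ∈ {n : ℕ | ∃ J, J ⊆ X ∧ M.Indep J ∧ J.ncard = n}, n ≤ I.ncard := by
    rintro n ⟨J, hJX, hJ, rfl⟩
    have hle : J.encard ≤ I.encard := hI.encard_eq_eRk ▸ hJ.encard_le_eRk_of_subset hJX
    exact ENat.toNat_le_toNat hle hIfin.encard_lt_top.ne
  have hmem : I.ncard ∈ {n : ℕ | ∃ J, J ⊆ X ∧ M.Indep J ∧ J.ncard = n} :=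
    ⟨I, hI.subset, hI.indep, rfl⟩
  exact (csSup_le ⟨_, hmem⟩ hbound).antisymm (le_csSup ⟨_, hbound⟩ hmem)

end Matroid

open Matroid

lemma extSet_subset_closure_sdiff_intSet {α : Type*} [LinearOrder α] {M N : Matroid α}
    (hMN : ∀ F, N.IsFlat F → M.IsFlat F) (hE : M.E = N.E) (B : Set α) :
    ExtSet M B ⊆ M.closure (B \ IntSet N B) := by
  rintro q ⟨hqB, C, hC, hCB, hqC, hqmin⟩
  rw [isCircuit'_iff] at hC
  suffices hsub : C \ {q} ⊆ B \ IntSet N B from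
    M.closure_subset_closure hsub (hC.mem_closure_sdiff_singleton_of_mem hqC)
  rintro y ⟨hyC, hyq : y ≠ q⟩
  have hyB : y ∈ B := (hCB hyC).resolve_right hyq
  refine ⟨hyB, ?_⟩
  rintro ⟨-, D, hD, hDB, hyD, hymin⟩
  rw [isCocircuit'_iff] at hD
  -- another element of `C ∩ D` lies outside `B`, so it is `q`, the minimum of both `C` and `D`
  refine hC.inter_isCocircuit_ne_singleton_of_perspective hMN hE hD (e := y) ?_
  refine subset_antisymm (fun z ⟨hzC, hzD⟩ ↦ ?_) (singleton_subset_iff.2 ⟨hyC, hyD⟩)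
  by_contra hzy
  have hzq : z = q := (hCB hzC).resolve_left ((hDB hzD).resolve_right hzy)
  subst hzq
  exact hyq ((hqmin y hyC).antisymm (hymin z hzD)).symm

/-- For a matroid perspective `M → N`, `B` independent in `M`, `P ⊆ Int_N(B)`,
`Q ⊆ Ext_M(B)`, and `A = (B ∖ P) ∪ Q`, we have `r_M(A) = |B| − |P|`. -/
theorem stmt6 {α : Type*} [Fintype α] [LinearOrder α] (M N : Matroid α)
    (hME : M.E = Set.univ) (hNE : N.E = Set.univ)
    (hMN : ∀ F, N.IsFlat F → M.IsFlat F)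
    (B : Set α) (hBi : M.Indep B)
    (P : Set α) (hP : P ⊆ IntSet N B) (Q : Set α) (hQ : Q ⊆ ExtSet M B) :
    M.rk' ((B \ P) ∪ Q) = B.ncard - P.ncard := by
  have hPB : P ⊆ B := fun p hp ↦ (hP hp).1
  have hQcl : Q ⊆ M.closure (B \ P) :=
    hQ.trans <| (extSet_subset_closure_sdiff_intSet hMN (hME.trans hNE.symm) B).trans <|
      M.closure_subset_closure (sdiff_subset_sdiff_right hP)
  have hbasis : M.IsBasis (B \ P) ((B \ P) ∪ Q) :=
    (hBi.subset sdiff_subset).isBasis_of_subset_of_subset_closure subset_union_left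
      (union_subset (M.subset_closure _ (hME ▸ subset_univ _)) hQcl)
  rw [hbasis.isBasis'.rk'_eq_ncard (toFinite _), ncard_sdiff hPB]
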